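/- arXiv:1504.01318 — 4 statements merged into one kernel-verified Lean document; each statement's English description precedes it below -/
import Mathlib

section
/- For any polynomial f and nonzero complex numbers a_1, a_2, the identity f(x - a_1 B_1 - a_2 B_2) = f(x + a_1 B_1 + a_2 B_2) + a_1 f'(x + a_2 B_2) + a_2 f'(x + a_1 B_1) + a_1 a_2 f''(x) holds, where evaluation at independent Bernoulli symbols B_1, B_2 means replacing each monomial B_1^i B_2^j by B_i B_j (products of Bernoulli numbers). Concretely, if f(y) = y^m, this reads: \sum_{i+j+k=m} \binom{m}{i,j,k} x^i (-a_1)^j (-a_2)^k B_j B_k = \sum_{i+j+k=m} \binom{m}{i,j,k} x^i a_1^j a_2^k B_j B_k + m a_1 \sum_{i+j=m-1} \binom{m-1}{i} x^i a_2^j B_j + m a_2 \sum_{i+j=m-1} \binom{m-1}{i} x^i a_1^j B_j + m(m-1) a_1 a_2 x^{m-2}. -/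
/-! Read sequences through their exponential generating functions, so that the binomial
convolution `binomialConv` is the product of EGFs, `egfX` is the EGF `t`, and `egfMulX` is
multiplication by `t`. The umbral sum is then the coefficient of `t^m / m!` in
`e^{xt} · β(-a₁t) · β(-a₂t)`, where `β(t) = t / (e^t - 1)` is the EGF of the Bernoulli numbers.
Since `β(-t) = t e^t / (e^t - 1) = β(t) + t`, i.e. `(-a)^n B_n = a^n B_n + a [n = 1]`, expanding
the product `(β(a₁t) + a₁t)(β(a₂t) + a₂t)` gives the four terms of the identity.
-/

open Finset

section BinomialConvolution

variable {R : Type*} [CommSemiring R]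

def binomialConv (u v : ℕ → R) (n : ℕ) : R :=
  ∑ p ∈ antidiagonal n, (n.choose p.1 : R) * u p.1 * v p.2

def egfX : ℕ → R := fun n => if n = 1 then 1 else 0

def egfMulX (u : ℕ → R) (n : ℕ) : R := n * u (n - 1)

theorem binomialConv_comm (u v : ℕ → R) : binomialConv u v = binomialConv v u := by
  funext n
  rw [binomialConv, ← Nat.sum_antidiagonal_swap]
  refine sum_congr rfl fun p hp => ?_
  rw [Prod.fst_swap, Prod.snd_swap, ← Nat.choose_symm_of_eq_add (mem_antidiagonal.mp hp).symm]
  ring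

theorem binomialConv_add_left (u v w : ℕ → R) :
    binomialConv (u + v) w = binomialConv u w + binomialConv v w := by
  funext n
  simp only [binomialConv, Pi.add_apply, mul_add, add_mul, sum_add_distrib]

theorem binomialConv_add_right (u v w : ℕ → R) :
    binomialConv u (v + w) = binomialConv u v + binomialConv u w := by
  rw [binomialConv_comm, binomialConv_add_left, binomialConv_comm v, binomialConv_comm w]

theorem binomialConv_smul_left (c : R) (u v : ℕ → R) :
    binomialConv (c • u) v = c • binomialConv u v := by
  funext n
  simp only [binomialConv, Pi.smul_apply, smul_eq_mul, mul_sum]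
  exact sum_congr rfl fun _ _ => by ring

theorem binomialConv_smul_right (c : R) (u v : ℕ → R) :
    binomialConv u (c • v) = c • binomialConv u v := by
  rw [binomialConv_comm, binomialConv_smul_left, binomialConv_comm]

theorem binomialConv_egfX_left (u : ℕ → R) : binomialConv egfX u = egfMulX u := by
  funext n
  rcases n with _ | n
  · simp [binomialConv, egfX, egfMulX]
  · rw [binomialConv, Nat.sum_antidiagonal_succ, sum_eq_single_of_mem (0, n) (by simp)]
    · simp [egfX, egfMulX]
    · rintro ⟨i, j⟩ _ hij
      have : i ≠ 0 := by rintro rfl; simp_all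
      simp [egfX, this]

theorem binomialConv_egfMulX_left (u v : ℕ → R) :
    binomialConv (egfMulX u) v = egfMulX (binomialConv u v) := by
  funext n
  rcases n with _ | n
  · simp [binomialConv, egfMulX]
  · simp only [binomialConv, egfMulX, Nat.sum_antidiagonal_succ, Nat.cast_zero, zero_mul,
      mul_zero, zero_add, Nat.add_sub_cancel, mul_sum]
    refine sum_congr rfl fun p _ => ?_
    calc _ = (((n + 1).choose (p.1 + 1) * (p.1 + 1) : ℕ) : R) * u p.1 * v p.2 := by
          push_cast; ring
      _ = _ := by rw [← Nat.add_one_mul_choose_eq]; push_cast; ring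

theorem binomialConv_egfX_right (u : ℕ → R) : binomialConv u egfX = egfMulX u := by
  rw [binomialConv_comm, binomialConv_egfX_left]

theorem binomialConv_egfMulX_right (u v : ℕ → R) :
    binomialConv u (egfMulX v) = egfMulX (binomialConv u v) := by
  rw [binomialConv_comm, binomialConv_egfMulX_left, binomialConv_comm]

theorem binomialConv_add_smul_egfX (u v : ℕ → R) (a b : R) :
    binomialConv (u + a • egfX) (v + b • egfX) =
      binomialConv u v + a • egfMulX v + b • egfMulX u + (a * b) • egfMulX egfX := by
  rw [binomialConv_add_left, binomialConv_add_right, binomialConv_add_right,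
    binomialConv_smul_left, binomialConv_smul_left, binomialConv_smul_right,
    binomialConv_smul_right, binomialConv_egfX_left, binomialConv_egfX_left,
    binomialConv_egfX_right, smul_smul]
  abel

theorem binomialConv_binomialConv_add_smul_egfX (w u v : ℕ → R) (a b : R) :
    binomialConv w (binomialConv (u + a • egfX) (v + b • egfX)) =
      binomialConv w (binomialConv u v) + a • egfMulX (binomialConv w v) +
        b • egfMulX (binomialConv w u) + (a * b) • egfMulX (egfMulX w) := by
  rw [binomialConv_add_smul_egfX, binomialConv_add_right, binomialConv_add_right,
    binomialConv_add_right, binomialConv_smul_right, binomialConv_smul_right,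
    binomialConv_smul_right, binomialConv_egfMulX_right, binomialConv_egfMulX_right,
    binomialConv_egfMulX_right, binomialConv_egfX_right]

theorem Nat.multinomial_univ_fin_three (p : Fin 3 → ℕ) :
    Nat.multinomial univ p = (p 0 + p 1 + p 2).choose (p 0) * (p 1 + p 2).choose (p 1) := by
  rw [show (univ : Finset (Fin 3)) = {0, 1, 2} by decide, Nat.multinomial_insert (by decide),
    Nat.multinomial_insert (by decide), Nat.multinomial_singleton]
  simp [add_assoc]

theorem sum_antidiagonalTuple_three_multinomial (m : ℕ) (u v w : ℕ → R) :
    ∑ p ∈ Nat.antidiagonalTuple 3 m, (Nat.multinomial univ p : R) * u (p 0) * v (p 1) * w (p 2) =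
      binomialConv u (binomialConv v w) m := by
  simp only [binomialConv, mul_sum, sum_sigma']
  refine sum_nbij' (fun p => ⟨(p 0, p 1 + p 2), (p 1, p 2)⟩) (fun q => ![q.1.1, q.2.1, q.2.2])
    ?_ ?_ ?_ ?_ ?_
  · intro p hp
    simp only [Nat.mem_antidiagonalTuple, Fin.sum_univ_three] at hp
    simp [← hp, add_assoc]
  · rintro ⟨⟨i, b⟩, j, k⟩ hq
    simp only [mem_sigma, HasAntidiagonal.mem_antidiagonal] at hq
    simp [Nat.mem_antidiagonalTuple, Fin.sum_univ_three, ← hq.1, hq.2, add_assoc]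
  · intro p _
    funext i
    fin_cases i <;> rfl
  · rintro ⟨⟨i, b⟩, j, k⟩ hq
    simp only [mem_sigma, HasAntidiagonal.mem_antidiagonal] at hq
    simp [hq.2]
  · intro p hp
    simp only [Nat.mem_antidiagonalTuple, Fin.sum_univ_three] at hp
    rw [Nat.multinomial_univ_fin_three, hp]
    push_cast
    ring

end BinomialConvolution

theorem egfMulX_egfMulX {R : Type*} [CommRing R] (u : ℕ → R) (n : ℕ) :
    egfMulX (egfMulX u) n = n * (n - 1) * u (n - 2) := by
  rcases n with _ | n
  · simp [egfMulX]
  · simp [egfMulX, mul_assoc]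

theorem neg_pow_mul_bernoulli {K : Type*} [Field K] [CharZero K] (a : K) :
    (fun n => (-a) ^ n * (bernoulli n : K)) = (fun n => a ^ n * (bernoulli n : K)) + a • egfX := by
  funext n
  have hsign : ((-1) ^ n * bernoulli n : K) = bernoulli' n := by
    exact_mod_cast (bernoulli'_eq_bernoulli n).symm
  rw [neg_pow, mul_comm ((-1) ^ n), mul_assoc, hsign]
  by_cases hn : n = 1
  · subst hn
    simp only [Pi.add_apply, Pi.smul_apply, smul_eq_mul, egfX, bernoulli'_one, bernoulli_one,
      pow_one, if_true]
    push_cast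
    ring
  · simp [egfX, hn, bernoulli_eq_bernoulli'_of_ne_one hn]

theorem symbolic_two_bernoulli_general (m : ℕ) (x a₁ a₂ : ℂ) :
    (∑ p ∈ Finset.Nat.antidiagonalTuple 3 m,
        (Nat.multinomial Finset.univ p : ℂ) * x ^ (p 0) * (-a₁) ^ (p 1) * (-a₂) ^ (p 2) *
          (bernoulli (p 1) : ℂ) * (bernoulli (p 2) : ℂ)) =
      (∑ p ∈ Finset.Nat.antidiagonalTuple 3 m,
        (Nat.multinomial Finset.univ p : ℂ) * x ^ (p 0) * a₁ ^ (p 1) * a₂ ^ (p 2) *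
          (bernoulli (p 1) : ℂ) * (bernoulli (p 2) : ℂ)) +
      (m : ℂ) * a₁ * (∑ p ∈ Finset.HasAntidiagonal.antidiagonal (m - 1),
        ((m - 1).choose p.1 : ℂ) * x ^ p.1 * a₂ ^ p.2 * (bernoulli p.2 : ℂ)) +
      (m : ℂ) * a₂ * (∑ p ∈ Finset.HasAntidiagonal.antidiagonal (m - 1),
        ((m - 1).choose p.1 : ℂ) * x ^ p.1 * a₁ ^ p.2 * (bernoulli p.2 : ℂ)) +
      (m : ℂ) * ((m : ℂ) - 1) * a₁ * a₂ * x ^ (m - 2) := by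
  let B (a : ℂ) (n : ℕ) : ℂ := a ^ n * bernoulli n
  have umbral (b c : ℂ) : ∑ p ∈ Nat.antidiagonalTuple 3 m, (Nat.multinomial univ p : ℂ) *
      x ^ (p 0) * b ^ (p 1) * c ^ (p 2) * (bernoulli (p 1) : ℂ) * (bernoulli (p 2) : ℂ) =
      binomialConv (x ^ ·) (binomialConv (B b) (B c)) m := by
    rw [← sum_antidiagonalTuple_three_multinomial]
    exact sum_congr rfl fun _ _ => by ring
  have singleConv (a : ℂ) : binomialConv (x ^ ·) (B a) (m - 1) = ∑ p ∈ antidiagonal (m - 1),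
      ((m - 1).choose p.1 : ℂ) * x ^ p.1 * a ^ p.2 * (bernoulli p.2 : ℂ) :=
    sum_congr rfl fun _ _ => (mul_assoc _ _ _).symm
  have hB (a : ℂ) : B (-a) = B a + a • egfX := neg_pow_mul_bernoulli a
  rw [umbral, umbral, hB, hB, binomialConv_binomialConv_add_smul_egfX]
  simp only [Pi.add_apply, Pi.smul_apply, smul_eq_mul]
  rw [egfMulX_egfMulX, egfMulX, egfMulX, singleConv, singleConv]
  ring

/-- The symbolic identity `f(x - a₁𝓑₁ - a₂𝓑₂) = f(x + a₁𝓑₁ + a₂𝓑₂) + a₁ f'(x + a₂𝓑₂)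
+ a₂ f'(x + a₁𝓑₁) + a₁a₂ f''(x)` for `f(y) = y^m`, written out with umbral evaluation
(`𝓑ᵢ^j ↦ B_j`, the Bernoulli numbers). -/
theorem symbolic_two_bernoulli (m : ℕ) (hm : 2 ≤ m) (x a₁ a₂ : ℂ) (h₁ : a₁ ≠ 0) (h₂ : a₂ ≠ 0) :
    (∑ p ∈ Finset.Nat.antidiagonalTuple 3 m,
        (Nat.multinomial Finset.univ p : ℂ) * x ^ (p 0) * (-a₁) ^ (p 1) * (-a₂) ^ (p 2) *
          (bernoulli (p 1) : ℂ) * (bernoulli (p 2) : ℂ)) =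
      (∑ p ∈ Finset.Nat.antidiagonalTuple 3 m,
        (Nat.multinomial Finset.univ p : ℂ) * x ^ (p 0) * a₁ ^ (p 1) * a₂ ^ (p 2) *
          (bernoulli (p 1) : ℂ) * (bernoulli (p 2) : ℂ)) +
      (m : ℂ) * a₁ * (∑ p ∈ Finset.HasAntidiagonal.antidiagonal (m - 1),
        ((m - 1).choose p.1 : ℂ) * x ^ p.1 * a₂ ^ p.2 * (bernoulli p.2 : ℂ)) +
      (m : ℂ) * a₂ * (∑ p ∈ Finset.HasAntidiagonal.antidiagonal (m - 1),
        ((m - 1).choose p.1 : ℂ) * x ^ p.1 * a₁ ^ p.2 * (bernoulli p.2 : ℂ)) +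
      (m : ℂ) * ((m : ℂ) - 1) * a₁ * a₂ * x ^ (m - 2) :=
  symbolic_two_bernoulli_general m x a₁ a₂
end

section
/- Let a = (a_1,...,a_n) \in \mathbb{R}^n with all a_i \neq 0 and A = a_1 + ... + a_n \neq 0. Then for all integers l, m \geq 0 and all x: (-1)^m \sum_{k=0}^{m} \binom{m}{k} A^{m-k} B_{l+k}(x; a) = (-1)^l \sum_{k=0}^{l} \binom{l}{k} A^{l-k} B_{m+k}(-x; a). -/
/-!
Put `c_j = B_j(x; a)` and let `L` be the linear functional on `ℝ[X]` with `L(X^j) = c_j`; the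
left-hand side is `(-1)^m L(X^l (X + A)^m)`. Under `z ↦ -z` each factor `a z/(e^{a z} - 1)`
picks up `e^{a z}`, so the generating function satisfies `F_{-x}(z) = F_{x+A}(-z)`, while
`F_{x+A}(z) = e^{A z} F_x(z)`. Together, `B_j(-x; a) = L((-(X + A))^j)`, so the right-hand side is
`L` of `X^m (X + A)^l` with `X ↦ -(X + A)` substituted, which is `(-1)^(l+m) X^l (X + A)^m`.
-/
open PowerSeries

/-- The power series `(e^{a z} - 1)/z = ∑_k a^k z^k/(k+1)!`. -/
noncomputable def egfShift (a : ℝ) : PowerSeries ℝ :=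
  PowerSeries.mk fun k => a ^ k / (Nat.factorial (k + 1) : ℝ)

/-- The power series `e^{x z} = ∑_k x^k z^k/k!`. -/
noncomputable def expPS (x : ℝ) : PowerSeries ℝ :=
  PowerSeries.mk fun k => x ^ k / (Nat.factorial k : ℝ)

/-- The Bernoulli-Barnes polynomials `B_m(x; a)`. -/
noncomputable def barnesPoly {n : ℕ} (a : Fin n → ℝ) (x : ℝ) (m : ℕ) : ℝ :=
  (Nat.factorial m : ℝ) * PowerSeries.coeff m (expPS x * ∏ j, (egfShift (a j))⁻¹)

namespace Polynomial

variable {R : Type*} [CommSemiring R]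

noncomputable def umbralEval (c : ℕ → R) : R[X] →ₗ[R] R :=
  lsum fun i => LinearMap.id.smulRight (c i)

theorem umbralEval_monomial (c : ℕ → R) (i : ℕ) (r : R) :
    umbralEval c (monomial i r) = r * c i := by
  simp [umbralEval]

theorem umbralEval_aeval (c : ℕ → R) (q p : R[X]) :
    umbralEval (fun j => umbralEval c (q ^ j)) p = umbralEval c (aeval q p) := by
  induction p using Polynomial.induction_on' with
  | add p p' hp hp' => simp only [map_add, hp, hp']
  | monomial n r =>
    rw [umbralEval_monomial, aeval_monomial, ← Algebra.smul_def, map_smul, smul_eq_mul]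

theorem umbralEval_X_pow_mul_X_add_C_pow (c : ℕ → R) (A : R) (l m : ℕ) :
    umbralEval c (X ^ l * (X + C A) ^ m)
      = ∑ k ∈ Finset.range (m + 1), (m.choose k : R) * A ^ (m - k) * c (l + k) := by
  rw [add_pow, Finset.mul_sum, map_sum]
  refine Finset.sum_congr rfl fun k _ => ?_
  have : (X : R[X]) ^ l * (X ^ k * C A ^ (m - k) * (m.choose k : R[X]))
      = monomial (l + k) ((m.choose k : R) * A ^ (m - k)) := by
    rw [← C_mul_X_pow_eq_monomial, C_mul, C_pow, ← map_natCast C, pow_add]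
    ring
  rw [this, umbralEval_monomial]

theorem aeval_neg_X_add_C_X_pow_mul_X_add_C_pow {R : Type*} [CommRing R] (A : R) (l m : ℕ) :
    aeval (-(X + C A)) (X ^ m * (X + C A) ^ l)
      = (-1 : R) ^ (l + m) • (X ^ l * (X + C A) ^ m) := by
  have hshift : -(X + C A) + C A = -X := by ring
  rw [map_mul, map_pow, map_pow, aeval_X, map_add, aeval_X, aeval_C, algebraMap_eq, hshift,
    neg_pow (X + C A), neg_pow (X : R[X]), smul_eq_C_mul, map_pow, map_neg, map_one]
  ring

end Polynomial

namespace PowerSeries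

theorem constantCoeff_rescale {R : Type*} [CommSemiring R] (c : R) (φ : R⟦X⟧) :
    constantCoeff (rescale c φ) = constantCoeff φ := by
  rw [← coeff_zero_eq_constantCoeff_apply, ← coeff_zero_eq_constantCoeff_apply, coeff_rescale,
    pow_zero, one_mul]

theorem rescale_inv {k : Type*} [Field k] (c : k) (φ : k⟦X⟧) :
    rescale c φ⁻¹ = (rescale c φ)⁻¹ := by
  rcases eq_or_ne (constantCoeff φ) 0 with h | h
  · rw [inv_eq_zero.mpr h, inv_eq_zero.mpr (by rwa [constantCoeff_rescale]), map_zero]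
  · rw [eq_inv_iff_mul_eq_one (by rwa [constantCoeff_rescale]), ← map_mul,
      PowerSeries.inv_mul_cancel _ h, map_one]

end PowerSeries

theorem expPS_eq_rescale_exp (x : ℝ) : expPS x = rescale x (exp ℝ) := by
  ext k
  simp [expPS, coeff_rescale, coeff_exp, div_eq_mul_inv, mul_comm]

theorem expPS_zero : expPS 0 = 1 := by
  rw [expPS_eq_rescale_exp, rescale_zero_apply, constantCoeff_exp, map_one]

theorem expPS_mul_expPS (x y : ℝ) : expPS x * expPS y = expPS (x + y) := by
  simp only [expPS_eq_rescale_exp, exp_mul_exp_eq_exp_add]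

theorem prod_expPS {ι : Type*} (s : Finset ι) (f : ι → ℝ) :
    ∏ j ∈ s, expPS (f j) = expPS (∑ j ∈ s, f j) := by
  induction s using Finset.cons_induction with
  | empty => simp [expPS_zero]
  | cons i s hi ih => rw [Finset.prod_cons, Finset.sum_cons, ih, expPS_mul_expPS]

theorem rescale_expPS (c x : ℝ) : rescale c (expPS x) = expPS (x * c) := by
  rw [expPS_eq_rescale_exp, expPS_eq_rescale_exp, rescale_rescale]

theorem rescale_egfShift (c a : ℝ) : rescale c (egfShift a) = egfShift (a * c) := by
  ext k
  simp only [egfShift, coeff_rescale, coeff_mk, mul_pow]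
  ring

theorem C_mul_X_mul_egfShift (a : ℝ) : C a * X * egfShift a = expPS a - 1 := by
  ext k
  cases k with
  | zero => simp [expPS]
  | succ k =>
    rw [mul_assoc, coeff_C_mul, coeff_succ_X_mul]
    simp only [egfShift, expPS, coeff_mk, map_sub, coeff_one, pow_succ, Nat.factorial_succ,
      Nat.cast_mul, Nat.cast_add, Nat.cast_one, Nat.add_eq_zero_iff, one_ne_zero, and_false,
      if_false, sub_zero]
    field_simp

theorem constantCoeff_egfShift (a : ℝ) : constantCoeff (egfShift a) = 1 := by
  simp [egfShift]

-- Proved at `a = 1`, where `X` can be cancelled, and then rescaled: no division by `a` is needed.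
theorem egfShift_neg_mul_expPS (a : ℝ) : egfShift (-a) * expPS a = egfShift a := by
  have h₁ : egfShift (-1) * expPS 1 = egfShift 1 := by
    have hpos := C_mul_X_mul_egfShift 1
    have hneg := C_mul_X_mul_egfShift (-1)
    rw [map_one, one_mul] at hpos
    rw [map_neg, map_one, neg_one_mul, neg_mul] at hneg
    apply X_mul_cancel
    rw [← mul_assoc, hpos, neg_eq_iff_eq_neg.mp hneg, neg_sub, sub_mul, one_mul, expPS_mul_expPS,
      neg_add_cancel, expPS_zero]
  simpa only [map_mul, rescale_egfShift, rescale_expPS, one_mul, neg_one_mul] using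
    congrArg (rescale a) h₁

theorem rescale_neg_one_inv_egfShift (a : ℝ) :
    rescale (-1) (egfShift a)⁻¹ = expPS a * (egfShift a)⁻¹ := by
  have hunit : ∀ b, constantCoeff (egfShift b) ≠ 0 := fun b => by
    rw [constantCoeff_egfShift]
    exact one_ne_zero
  rw [rescale_inv, rescale_egfShift, mul_neg_one, inv_eq_iff_mul_eq_one (hunit _), mul_right_comm,
    mul_comm (expPS a), egfShift_neg_mul_expPS, PowerSeries.mul_inv_cancel _ (hunit a)]

theorem factorial_mul_coeff_mul_expPS (f : PowerSeries ℝ) (y : ℝ) (j : ℕ) :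
    (j.factorial : ℝ) * coeff j (f * expPS y)
      = ∑ k ∈ Finset.range (j + 1),
          (j.choose k : ℝ) * y ^ (j - k) * ((k.factorial : ℝ) * coeff k f) := by
  rw [coeff_mul, Finset.Nat.sum_antidiagonal_eq_sum_range_succ_mk, Finset.mul_sum]
  refine Finset.sum_congr rfl fun k hk => ?_
  have hkj : k ≤ j := Nat.lt_succ_iff.mp (Finset.mem_range.mp hk)
  have hfact : (j.factorial : ℝ) = j.choose k * k.factorial * (j - k).factorial := by
    exact_mod_cast (Nat.choose_mul_factorial_mul_factorial hkj).symm
  simp only [expPS, coeff_mk, hfact]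
  field_simp

theorem barnesPoly_add {n : ℕ} (a : Fin n → ℝ) (x y : ℝ) (j : ℕ) :
    barnesPoly a (x + y) j
      = Polynomial.umbralEval (barnesPoly a x) ((Polynomial.X + Polynomial.C y) ^ j) := by
  rw [← one_mul ((Polynomial.X + Polynomial.C y) ^ j), ← pow_zero Polynomial.X,
    Polynomial.umbralEval_X_pow_mul_X_add_C_pow, barnesPoly, ← expPS_mul_expPS, mul_right_comm,
    factorial_mul_coeff_mul_expPS]
  simp only [zero_add, barnesPoly]

theorem barnesPoly_neg {n : ℕ} (a : Fin n → ℝ) (x : ℝ) (j : ℕ) :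
    barnesPoly a (-x) j = (-1) ^ j * barnesPoly a (x + ∑ i, a i) j := by
  have hreflect : expPS (-x) * ∏ i, (egfShift (a i))⁻¹
      = rescale (-1) (expPS (x + ∑ i, a i) * ∏ i, (egfShift (a i))⁻¹) := by
    rw [map_mul, rescale_expPS, map_prod,
      Finset.prod_congr rfl fun i _ => rescale_neg_one_inv_egfShift (a i), Finset.prod_mul_distrib,
      prod_expPS, ← mul_assoc, expPS_mul_expPS, mul_neg_one, neg_add, neg_add_cancel_right]
  rw [barnesPoly, hreflect, coeff_rescale, barnesPoly]
  ring

theorem barnesPoly_neg_eq_umbralEval {n : ℕ} (a : Fin n → ℝ) (x : ℝ) (j : ℕ) :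
    barnesPoly a (-x) j
      = Polynomial.umbralEval (barnesPoly a x)
          ((-(Polynomial.X + Polynomial.C (∑ i, a i))) ^ j) := by
  rw [barnesPoly_neg, barnesPoly_add, neg_pow (Polynomial.X + Polynomial.C _ : Polynomial ℝ),
    ← Polynomial.C_1, ← map_neg, ← map_pow, ← Polynomial.smul_eq_C_mul, map_smul,
    smul_eq_mul]

theorem barnesPoly_symmetry_sum_general {n : ℕ} (a : Fin n → ℝ)
    (A : ℝ) (hA : A = ∑ i, a i) (l m : ℕ) (x : ℝ) :
    (-1 : ℝ) ^ m * ∑ k ∈ Finset.range (m + 1),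
        (m.choose k : ℝ) * A ^ (m - k) * barnesPoly a x (l + k) =
      (-1 : ℝ) ^ l * ∑ k ∈ Finset.range (l + 1),
        (l.choose k : ℝ) * A ^ (l - k) * barnesPoly a (-x) (m + k) := by
  have hneg : barnesPoly a (-x)
      = fun j => Polynomial.umbralEval (barnesPoly a x) ((-(Polynomial.X + Polynomial.C A)) ^ j) :=
    funext fun j => hA ▸ barnesPoly_neg_eq_umbralEval a x j
  have hsign : (-1 : ℝ) ^ l * (-1) ^ (l + m) = (-1) ^ m := by
    rw [← pow_add, ← add_assoc, pow_add, Even.neg_one_pow ⟨l, rfl⟩, one_mul]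
  rw [← Polynomial.umbralEval_X_pow_mul_X_add_C_pow,
    ← Polynomial.umbralEval_X_pow_mul_X_add_C_pow, hneg, Polynomial.umbralEval_aeval,
    Polynomial.aeval_neg_X_add_C_X_pow_mul_X_add_C_pow, map_smul, smul_eq_mul, ← mul_assoc, hsign]

/-- `(-1)^m ∑_{k=0}^m (m choose k) A^{m-k} B_{l+k}(x;a)
   = (-1)^l ∑_{k=0}^l (l choose k) A^{l-k} B_{m+k}(-x;a)`. -/
theorem barnesPoly_symmetry_sum {n : ℕ} (a : Fin n → ℝ) (ha : ∀ i, a i ≠ 0)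
    (A : ℝ) (hA : A = ∑ i, a i) (hA0 : A ≠ 0) (l m : ℕ) (x : ℝ) :
    (-1 : ℝ) ^ m * ∑ k ∈ Finset.range (m + 1),
        (m.choose k : ℝ) * A ^ (m - k) * barnesPoly a x (l + k) =
      (-1 : ℝ) ^ l * ∑ k ∈ Finset.range (l + 1),
        (l.choose k : ℝ) * A ^ (l - k) * barnesPoly a (-x) (m + k) :=
  barnesPoly_symmetry_sum_general a A hA l m x
end

section
/- For all complex (or real) x, y and every integer m \geq 0, the polynomial identity -(m+1) y^m (2 y^{m+1} - (x+y)^m (x+2y)) = \sum_{k=0}^{m} \binom{m+1}{k} (m+k+1) x^{m+1-k} y^{m+k} holds. -/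
/-!
Dividing by `y ^ m` and adding the missing top term `k = m + 1`, the sum becomes
`∑ₖ C(m+1,k) (m+1+k) x^(m+1-k) y^k`. The part with weight `m + 1` is `(m+1) (x+y)^(m+1)` by the
binomial theorem, and the part with weight `k` is `y ∂_y (x+y)^(m+1) = (m+1) y (x+y)^m`;
together they give `(m+1) (x+y)^m (x+2y)`.
-/

open Finset

variable {R : Type*} [CommSemiring R]

theorem sum_range_mul_choose_mul_pow (n : ℕ) (x y : R) :
    ∑ k ∈ range (n + 2), (k : R) * (n + 1).choose k * x ^ (n + 1 - k) * y ^ k =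
      (n + 1) * y * (x + y) ^ n := by
  rw [sum_range_succ', add_comm x y, add_pow, mul_sum]
  simp only [Nat.cast_zero, zero_mul, add_zero]
  refine sum_congr rfl fun k _ => ?_
  have hchoose : ((k + 1 : ℕ) : R) * (n + 1).choose (k + 1) = (n + 1) * n.choose k := by
    have := congrArg (Nat.cast : ℕ → R) (Nat.add_one_mul_choose_eq n k)
    push_cast at this ⊢
    rw [this, mul_comm]
  rw [Nat.add_sub_add_right, pow_succ, hchoose]
  ring

theorem sum_range_choose_mul_add_mul_pow (n : ℕ) (x y : R) :
    ∑ k ∈ range (n + 2), ((n + 1).choose k : R) * (n + k + 1) * x ^ (n + 1 - k) * y ^ k =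
      (n + 1) * (x + y) ^ n * (x + 2 * y) := by
  have hsplit : ∀ k, ((n + 1).choose k : R) * (n + k + 1) * x ^ (n + 1 - k) * y ^ k =
      (n + 1) * (y ^ k * x ^ (n + 1 - k) * (n + 1).choose k) +
        (k : R) * (n + 1).choose k * x ^ (n + 1 - k) * y ^ k := fun k => by ring
  rw [sum_congr rfl fun k _ => hsplit k, sum_add_distrib, ← mul_sum, ← add_pow, add_comm y x,
    sum_range_mul_choose_mul_pow]
  ring

/-- The elementary polynomial identity
`-(m+1) y^m (2y^{m+1} - (x+y)^m (x+2y)) = ∑_{k=0}^m (m+1 choose k)(m+k+1) x^{m+1-k} y^{m+k}`. -/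
theorem elementary_poly_identity (m : ℕ) (x y : ℂ) :
    -((m : ℂ) + 1) * y ^ m * (2 * y ^ (m + 1) - (x + y) ^ m * (x + 2 * y)) =
      ∑ k ∈ Finset.range (m + 1),
        ((m + 1).choose k : ℂ) * ((m : ℂ) + k + 1) * x ^ (m + 1 - k) * y ^ (m + k) := by
  have h := sum_range_choose_mul_add_mul_pow m x y
  rw [sum_range_succ, Nat.choose_self, Nat.sub_self, pow_zero] at h
  simp_rw [pow_add y m, ← mul_assoc, mul_right_comm _ (y ^ m), ← sum_mul]
  push_cast at h
  linear_combination -y ^ m * h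
end

section
/- For every integer p \geq 0, the hypergeometric identity 2F1(1,1; p+2; z) = ((p+1)/z) [\sum_{\ell=0}^{p-1} (1/(p-\ell)) ((z-1)/z)^{\ell} - ((z-1)/z)^p \log(1-z)] holds for all complex z with 0 < |z| < 1. -/
/-!
Write `F_p(z) = ∑ c_p(n) zⁿ` with `c_p(n) = (p+1)! n! / (p+1+n)!`; then `F_0(z) = -log(1-z)/z`.
The contiguous relation `(p+1) c_{p+1}(n) = (p+2) (c_p(n) - c_p(n+1))` gives
`F_{p+1} = (p+2)/((p+1)z) · (1 - (1-z) F_p)`, and the closed form satisfies the same recursion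
because `1 - z = -z · (z-1)/z`.
-/

open Polynomial Finset Nat

noncomputable def hypergeomCoeff (p n : ℕ) : ℂ :=
  ((p + 1)! * n ! : ℂ) / (p + 1 + n)!

lemma hypergeomCoeff_zero_left (n : ℕ) : hypergeomCoeff 0 n = 1 / (n + 1) := by
  have hn : (n ! : ℂ) ≠ 0 := Nat.cast_ne_zero.2 (factorial_ne_zero n)
  rw [hypergeomCoeff, zero_add, factorial_one, add_comm 1 n, factorial_succ]
  push_cast
  field_simp

lemma hypergeomCoeff_zero_right (p : ℕ) : hypergeomCoeff p 0 = 1 := by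
  simp [hypergeomCoeff, factorial_ne_zero]

lemma hypergeomCoeff_succ_left (p n : ℕ) :
    hypergeomCoeff (p + 1) n =
      ((p : ℂ) + 2) / (p + 1) * (hypergeomCoeff p n - hypergeomCoeff p (n + 1)) := by
  rw [hypergeomCoeff, hypergeomCoeff, hypergeomCoeff, ← add_assoc,
    show p + 1 + 1 + n = p + 1 + n + 1 by omega, factorial_succ (p + 1 + n), factorial_succ n,
    factorial_succ (p + 1)]
  have hf : ((p + 1 + n)! : ℂ) ≠ 0 := Nat.cast_ne_zero.2 (factorial_ne_zero _)
  push_cast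
  have hpn : (p : ℂ) + 1 + n + 1 ≠ 0 := by exact_mod_cast (p + 1 + n).succ_ne_zero
  field_simp
  ring

lemma ascPochhammer_ratio_eq_hypergeomCoeff (p n : ℕ) :
    (ascPochhammer ℂ n).eval 1 * (ascPochhammer ℂ n).eval 1 /
      (ascPochhammer ℂ n).eval ((p : ℂ) + 2) / n ! = hypergeomCoeff p n := by
  have h := factorial_mul_ascPochhammer ℂ (p + 1) n
  push_cast at h
  rw [add_assoc, one_add_one_eq_two] at h
  have hpoch : (ascPochhammer ℂ n).eval ((p : ℂ) + 2) ≠ 0 := by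
    rintro h0
    rw [h0, mul_zero] at h
    exact factorial_ne_zero _ (by exact_mod_cast h.symm)
  have hp : ((p + 1)! : ℂ) ≠ 0 := Nat.cast_ne_zero.2 (factorial_ne_zero _)
  rw [ascPochhammer_eval_one, hypergeomCoeff, ← h]
  field_simp

noncomputable def hypergeomClosedForm (p : ℕ) (z : ℂ) : ℂ :=
  ((p : ℂ) + 1) / z *
    ((∑ ℓ ∈ range p, (1 / ((p : ℂ) - ℓ)) * ((z - 1) / z) ^ ℓ) -
      ((z - 1) / z) ^ p * Complex.log (1 - z))

lemma hypergeomClosedForm_zero (z : ℂ) :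
    hypergeomClosedForm 0 z = -Complex.log (1 - z) / z := by
  simp [hypergeomClosedForm, div_eq_inv_mul]

lemma hypergeomClosedForm_succ (p : ℕ) {z : ℂ} (hz : z ≠ 0) :
    hypergeomClosedForm (p + 1) z =
      ((p : ℂ) + 2) / ((p + 1) * z) * (1 - (1 - z) * hypergeomClosedForm p z) := by
  set w := (z - 1) / z
  have hsum : ∑ ℓ ∈ range (p + 1), 1 / (((p + 1 : ℕ) : ℂ) - ℓ) * w ^ ℓ =
      1 / ((p : ℂ) + 1) + w * ∑ ℓ ∈ range p, 1 / ((p : ℂ) - ℓ) * w ^ ℓ := by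
    rw [sum_range_succ', mul_sum, add_comm]
    push_cast
    congr 1
    · simp
    · refine sum_congr rfl fun ℓ _ => ?_
      ring
  have hw : 1 - z = -z * w := by
    simp only [w]
    field_simp
    ring
  have hp : (p : ℂ) + 1 ≠ 0 := Nat.cast_add_one_ne_zero p
  rw [hypergeomClosedForm, hsum, hypergeomClosedForm, hw]
  push_cast
  field_simp
  ring

lemma hasSum_hypergeomCoeff_zero {z : ℂ} (hz0 : z ≠ 0) (hz1 : ‖z‖ < 1) :
    HasSum (fun n => hypergeomCoeff 0 n * z ^ n) (hypergeomClosedForm 0 z) := by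
  rw [hypergeomClosedForm_zero]
  refine ((Complex.hasSum_taylorSeries_neg_log' hz1).div_const z).congr_fun fun n => ?_
  rw [hypergeomCoeff_zero_left, pow_succ]
  field_simp

lemma HasSum.hypergeomCoeff_succ {p : ℕ} {z F : ℂ} (hz : z ≠ 0)
    (h : HasSum (fun n => hypergeomCoeff p n * z ^ n) F) :
    HasSum (fun n => hypergeomCoeff (p + 1) n * z ^ n)
      (((p : ℂ) + 2) / ((p + 1) * z) * (1 - (1 - z) * F)) := by
  have hshift : HasSum (fun n => hypergeomCoeff p (n + 1) * z ^ (n + 1)) (F - 1) := by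
    simpa [hypergeomCoeff_zero_right] using (hasSum_nat_add_iff' 1).mpr h
  rw [show 1 - (1 - z) * F = z * F - (F - 1) by ring]
  refine (((h.mul_left z).sub hshift).mul_left _).congr_fun fun n => ?_
  have hp : (p : ℂ) + 1 ≠ 0 := Nat.cast_add_one_ne_zero p
  rw [hypergeomCoeff_succ_left, pow_succ]
  field_simp

theorem hasSum_hypergeomCoeff (p : ℕ) {z : ℂ} (hz0 : z ≠ 0) (hz1 : ‖z‖ < 1) :
    HasSum (fun n => hypergeomCoeff p n * z ^ n) (hypergeomClosedForm p z) := by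
  induction p with
  | zero => exact hasSum_hypergeomCoeff_zero hz0 hz1
  | succ p ih => exact hypergeomClosedForm_succ p hz0 ▸ ih.hypergeomCoeff_succ hz0

/-- The hypergeometric identity
`₂F₁(1,1;p+2;z) = ((p+1)/z)[∑_{ℓ=0}^{p-1} (1/(p-ℓ)) ((z-1)/z)^ℓ - ((z-1)/z)^p log(1-z)]`
for `0 < |z| < 1`. -/
theorem hypergeometric_log_identity (p : ℕ) (z : ℂ) (hz0 : 0 < ‖z‖) (hz1 : ‖z‖ < 1) :
    (∑' n : ℕ,
        (ascPochhammer ℂ n).eval 1 * (ascPochhammer ℂ n).eval 1 /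
          (ascPochhammer ℂ n).eval ((p : ℂ) + 2) * z ^ n / (Nat.factorial n : ℂ)) =
      ((p : ℂ) + 1) / z *
        ((∑ ℓ ∈ Finset.range p, (1 / ((p : ℂ) - ℓ)) * ((z - 1) / z) ^ ℓ) -
          ((z - 1) / z) ^ p * Complex.log (1 - z)) := by
  rw [← hypergeomClosedForm, ← (hasSum_hypergeomCoeff p (norm_pos_iff.mp hz0) hz1).tsum_eq]
  congr 1 with n
  rw [← ascPochhammer_ratio_eq_hypergeomCoeff]
  ring
end
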